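/- arXiv:math-ph/9904007 — 7 statements merged into one kernel-verified Lean document; each statement's English description precedes it below -/
import Mathlib

section
/- Let 0 → F → G → H → 0 be an exact sequence of finite-dimensional vector spaces with dim H = m, and let Λ₁ᵐG* = {α ∈ ΛᵐG* : i(u)i(v)α = 0 for all u, v ∈ F}. Then dim Λ₁ᵐG* = 1 + dim F · dim H. -/
/-!
Split `G = F ⊕ W` and take a basis `(fᵢ)` of `F` and `(w_j)` of `W`. The `m × m` minors of the
coordinate matrix in the columns `(w¹, …, wᵐ)`, or in these with `wʲ` replaced by `fⁱ`, lie in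
`Λ₁ᵐG*`: on vectors of `F` all these columns but at most one vanish. Evaluated at the
corresponding basis tuples they form a biorthogonal system. Conversely, a form in `Λ₁ᵐG*` vanishes
on basis tuples with two entries in `F`, and every other injective basis tuple is a permutation of
one of these `1 + dim F · m` tuples, so the form is determined by its values there.
-/

/-- The subspace `Λ₁ᵐG*` of alternating `m`-forms `α` on `G` such that `i(u)i(v)α = 0` for all
`u, v ∈ F`, i.e. `α` vanishes whenever two distinct of its arguments lie in `F`. -/
def Lambda1 (K G : Type*) [Field K] [AddCommGroup G] [Module K G]
    (F : Submodule K G) (m : ℕ) : Submodule K (G [⋀^Fin m]→ₗ[K] K) where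
  carrier := {α | ∀ (x : Fin m → G) (i j : Fin m), i ≠ j → x i ∈ F → x j ∈ F → α x = 0}
  add_mem' := by
    intro a b ha hb x i j hij hi hj
    simp [ha x i j hij hi hj, hb x i j hij hi hj]
  zero_mem' := by intro x i j _ _ _; simp
  smul_mem' := by
    intro c a ha x i j hij hi hj
    simp [ha x i j hij hi hj]

open Function Module

namespace AlternatingMap

variable {R M N ι : Type*} [CommSemiring R] [AddCommMonoid M] [Module R M] [AddCommMonoid N]
  [Module R N] [DecidableEq ι]

lemma map_eq_smul_map_update (f : M [⋀^ι]→ₗ[R] N) {v : ι → M} {a : ι} {c : R} {w : M}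
    (h : v a = c • w) : f v = c • f (update v a w) := by
  rw [← f.map_update_smul, ← h, update_eq_self]

lemma map_eq_zero_of_eq_smul (f : M [⋀^ι]→ₗ[R] N) {v : ι → M} {a a' : ι} (haa' : a ≠ a')
    {c c' : R} {w : M} (ha : v a = c • w) (ha' : v a' = c' • w) : f v = 0 := by
  have ha'' : update v a w a' = c' • w := by rw [update_of_ne haa'.symm, ha']
  rw [f.map_eq_smul_map_update ha, f.map_eq_smul_map_update ha'',
    f.map_eq_zero_of_eq _ (by rw [update_self, update_of_ne haa', update_self]) haa',
    smul_zero, smul_zero]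

end AlternatingMap

lemma Function.Injective.exists_perm_comp_eq {m : ℕ} {X : Type*} {σ ρ : Fin m → X}
    (hσ : Injective σ) (h : ∀ l, σ l ∈ Set.range ρ) :
    ∃ π : Equiv.Perm (Fin m), ρ ∘ π = σ := by
  choose π hπ using h
  have hπ_inj : Injective π := fun a a' haa' => hσ (by rw [← hπ a, ← hπ a', haa'])
  exact ⟨Equiv.ofBijective π (Finite.injective_iff_bijective.mp hπ_inj), funext hπ⟩

section

variable {K G : Type*} [Field K] [AddCommGroup G] [Module K G] {m : ℕ}

lemma AlternatingMap.compLinearMap_mem_Lambda1 {F : Submodule K G} {M : Type*}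
    [AddCommGroup M] [Module K M] (f : M [⋀^Fin m]→ₗ[K] K) (g : G →ₗ[K] M) (w : M)
    (hg : ∀ x ∈ F, ∃ c : K, g x = c • w) : f.compLinearMap g ∈ Lambda1 K G F m := by
  intro x a a' haa' hxa hxa'
  obtain ⟨c, hc⟩ := hg _ hxa
  obtain ⟨c', hc'⟩ := hg _ hxa'
  exact f.map_eq_zero_of_eq_smul (v := g ∘ x) haa' hc hc'

namespace Module.Basis

variable {ι : Type*} (b : Basis ι K G)

noncomputable def coordMinor (r : Fin m → ι) : G [⋀^Fin m]→ₗ[K] K :=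
  Matrix.detRowAlternating.compLinearMap (LinearMap.pi fun k => b.coord (r k))

lemma coordMinor_apply_basis [DecidableEq ι] (r σ : Fin m → ι) :
    b.coordMinor r (b ∘ σ) = (Matrix.of fun l k => if σ l = r k then (1 : K) else 0).det := by
  refine congrArg Matrix.det (Matrix.ext fun l k => ?_)
  simp [Finsupp.single_apply]

lemma coordMinor_apply_basis_self [DecidableEq ι] {r : Fin m → ι} (hr : Function.Injective r) :
    b.coordMinor r (b ∘ r) = 1 := by
  rw [coordMinor_apply_basis, ← Matrix.det_one (n := Fin m)]
  exact congrArg Matrix.det (Matrix.ext fun l k => by simp [hr.eq_iff, Matrix.one_apply])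

lemma coordMinor_apply_basis_eq_zero {r σ : Fin m → ι} {l : Fin m} (hl : σ l ∉ Set.range r) :
    b.coordMinor r (b ∘ σ) = 0 := by
  classical
  rw [coordMinor_apply_basis]
  exact Matrix.det_eq_zero_of_row_eq_zero l fun k => if_neg fun h => hl ⟨k, h.symm⟩

end Module.Basis

namespace Lambda1

variable {ι : Type*}

/-- For a basis of `G` indexed by `ι ⊕ Fin m` whose `inl` part spans `F`, the indices of the basis
tuples at which a form of `Λ₁ᵐG*` is determined: the `m` complement vectors, or these with the
`j`-th one replaced by the `i`-th vector of `F`. -/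
def indexTuple : Option (ι × Fin m) → Fin m → ι ⊕ Fin m
  | none => Sum.inr
  | some (i, j) => update Sum.inr j (Sum.inl i)

lemma indexTuple_some_apply (i : ι) (j k : Fin m) :
    indexTuple (some (i, j)) k = if k = j then Sum.inl i else Sum.inr k :=
  update_apply ..

lemma injective_indexTuple (t : Option (ι × Fin m)) : Injective (indexTuple t) := by
  rcases t with _ | ⟨i, j⟩
  · exact Sum.inr_injective
  · intro k k' h
    simp only [indexTuple_some_apply] at h
    split_ifs at h <;> simp_all

lemma inr_notMem_range_indexTuple (i : ι) (j : Fin m) :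
    Sum.inr j ∉ Set.range (indexTuple (some (i, j))) := by
  rintro ⟨k, hk⟩
  rw [indexTuple_some_apply] at hk
  split_ifs at hk
  simp_all

lemma exists_indexTuple_notMem_range {t t' : Option (ι × Fin m)} (h : t ≠ t') :
    ∃ l, indexTuple t l ∉ Set.range (indexTuple t') := by
  rcases t with _ | ⟨i, j⟩ <;> rcases t' with _ | ⟨i', j'⟩
  · exact absurd rfl h
  · exact ⟨j', inr_notMem_range_indexTuple i' j'⟩
  · exact ⟨j, by simp [indexTuple]⟩
  · by_cases hi : i = i'
    · have hj : j' ≠ j := by rintro rfl; exact h (hi ▸ rfl)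
      refine ⟨j', ?_⟩
      rw [indexTuple_some_apply, if_neg hj]
      exact inr_notMem_range_indexTuple i' j'
    · refine ⟨j, ?_⟩
      rintro ⟨k, hk⟩
      simp only [indexTuple_some_apply] at hk
      split_ifs at hk
      simp_all

lemma exists_range_indexTuple_superset {σ : Fin m → ι ⊕ Fin m}
    (hσ : ∀ l l' i i', σ l = Sum.inl i → σ l' = Sum.inl i' → l = l') :
    ∃ t, ∀ l, σ l ∈ Set.range (indexTuple t) := by
  by_cases hleft : ∃ l₀ i, σ l₀ = Sum.inl i
  · obtain ⟨l₀, i, hl₀⟩ := hleft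
    -- `σ` has only `m - 1` complement values, so misses some `Sum.inr j`
    obtain ⟨j, hj⟩ : ∃ j, ∀ l, σ l ≠ Sum.inr j := by
      by_contra! hcov
      choose f hf using hcov
      have hf_inj : Injective f := fun k k' h => Sum.inr_injective (by rw [← hf k, ← hf k', h])
      obtain ⟨k, rfl⟩ := Finite.injective_iff_surjective.mp hf_inj l₀
      exact Sum.inl_ne_inr (hl₀.symm.trans (hf k))
    refine ⟨some (i, j), fun l => ?_⟩
    by_cases hl : l = l₀
    · exact ⟨j, by rw [indexTuple_some_apply, if_pos rfl, hl, hl₀]⟩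
    · rcases hσl : σ l with i' | k
      · exact absurd (hσ l l₀ i' i hσl hl₀) hl
      · have hkj : k ≠ j := by rintro rfl; exact hj l hσl
        exact ⟨k, by rw [indexTuple_some_apply, if_neg hkj]⟩
  · simp only [not_exists] at hleft
    refine ⟨none, fun l => ?_⟩
    rcases hσl : σ l with i | k
    · exact absurd hσl (hleft l i)
    · exact ⟨k, rfl⟩

variable {F : Submodule K G} (b : Basis (ι ⊕ Fin m) K G)

lemma coordMinor_indexTuple_mem (hF : ∀ x ∈ F, ∀ k, b.repr x (Sum.inr k) = 0)
    (t : Option (ι × Fin m)) : b.coordMinor (indexTuple t) ∈ Lambda1 K G F m := by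
  rcases t with _ | ⟨i, j⟩
  · refine AlternatingMap.compLinearMap_mem_Lambda1 _ _ (0 : Fin m → K) fun x hx => ⟨0, ?_⟩
    ext k
    simp [indexTuple, hF x hx k]
  · refine AlternatingMap.compLinearMap_mem_Lambda1 _ _ (Pi.single j (1 : K))
      fun x hx => ⟨b.repr x (Sum.inl i), ?_⟩
    ext k
    by_cases hkj : k = j
    · simp [indexTuple_some_apply, hkj]
    · simp [indexTuple_some_apply, hkj, hF x hx k]

lemma coordMinor_indexTuple_apply [DecidableEq ι] (t t' : Option (ι × Fin m)) :
    b.coordMinor (indexTuple t') (b ∘ indexTuple t) = Pi.single (M := fun _ => K) t' 1 t := by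
  by_cases h : t = t'
  · subst h
    rw [Pi.single_eq_same, b.coordMinor_apply_basis_self (injective_indexTuple t)]
  · obtain ⟨l, hl⟩ := exists_indexTuple_notMem_range h
    rw [Pi.single_eq_of_ne h, b.coordMinor_apply_basis_eq_zero hl]

variable {b}

lemma eq_zero_of_apply_indexTuple (hbF : ∀ i, b (Sum.inl i) ∈ F)
    {α : G [⋀^Fin m]→ₗ[K] K} (hα : α ∈ Lambda1 K G F m)
    (h : ∀ t, α (b ∘ indexTuple t) = 0) : α = 0 := by
  refine b.ext_alternating fun σ hσ => ?_
  rw [AlternatingMap.zero_apply]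
  by_cases htwo : ∃ l l' i i', σ l = Sum.inl i ∧ σ l' = Sum.inl i' ∧ l ≠ l'
  · obtain ⟨l, l', i, i', hl, hl', hll'⟩ := htwo
    exact hα _ l l' hll' (by rw [hl]; exact hbF i) (by rw [hl']; exact hbF i')
  · -- at most one argument in `F`: up to order, `σ` is one of the index tuples
    obtain ⟨t, ht⟩ := exists_range_indexTuple_superset (σ := σ) fun l l' i i' hl hl' =>
      by_contra fun hll' => htwo ⟨l, l', i, i', hl, hl', hll'⟩
    obtain ⟨π, hπ⟩ := hσ.exists_perm_comp_eq ht
    have hσπ : (fun l => b (σ l)) = (b ∘ indexTuple t) ∘ π := by rw [comp_assoc, hπ]; rfl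
    rw [hσπ, α.map_perm, h t, smul_zero]

variable (b) in
noncomputable def evalIndexTuples : Lambda1 K G F m →ₗ[K] (Option (ι × Fin m) → K) where
  toFun α t := (α : G [⋀^Fin m]→ₗ[K] K) (b ∘ indexTuple t)
  map_add' _ _ := rfl
  map_smul' _ _ := rfl

lemma bijective_evalIndexTuples [Finite ι] (hbF : ∀ i, b (Sum.inl i) ∈ F)
    (hF : ∀ x ∈ F, ∀ k, b.repr x (Sum.inr k) = 0) : Bijective (evalIndexTuples (F := F) b) := by
  classical
  refine ⟨(injective_iff_map_eq_zero _).2 fun α hα =>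
    Subtype.ext (eq_zero_of_apply_indexTuple hbF α.2 (congrFun hα)), ?_⟩
  rw [← LinearMap.range_eq_top, eq_top_iff, ← (Pi.basisFun K _).span_eq, Submodule.span_le]
  rintro _ ⟨t', rfl⟩
  exact ⟨⟨_, coordMinor_indexTuple_mem b hF t'⟩,
    funext fun t => by simp [evalIndexTuples, coordMinor_indexTuple_apply]⟩

lemma finrank_eq_of_basis [Fintype ι] (hbF : ∀ i, b (Sum.inl i) ∈ F)
    (hF : ∀ x ∈ F, ∀ k, b.repr x (Sum.inr k) = 0) :
    finrank K (Lambda1 K G F m) = 1 + Fintype.card ι * m := by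
  rw [(LinearEquiv.ofBijective _ (bijective_evalIndexTuples hbF hF)).finrank_eq,
    finrank_fintype_fun_eq_card, Fintype.card_option, Fintype.card_prod, Fintype.card_fin,
    add_comm]

end Lambda1

lemma Submodule.exists_basis_sum_adapted [FiniteDimensional K G] (F : Submodule K G) :
    ∃ b : Basis (Fin (finrank K F) ⊕ Fin (finrank K (G ⧸ F))) K G,
      (∀ i, b (Sum.inl i) ∈ F) ∧ ∀ x ∈ F, ∀ k, b.repr x (Sum.inr k) = 0 := by
  obtain ⟨W, hW⟩ := F.exists_isCompl
  let e := F.prodEquivOfIsCompl W hW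
  let b := ((finBasis K F).prod ((finBasis K (G ⧸ F)).map (F.quotientEquivOfIsCompl W hW))).map e
  refine ⟨b, fun i => by simp [b, e], fun x hx k => ?_⟩
  have hx' : e.symm x = (⟨x, hx⟩, 0) := F.prodEquivOfIsCompl_symm_apply_left W hW ⟨x, hx⟩
  simp [b, hx']

end

/-- For an exact sequence `0 → F → G → H → 0` of finite-dimensional vector
spaces with `dim H = m` (here `H = G/F`), the space `Λ₁ᵐG*` of `m`-forms on `G` annihilated
by contraction with any two elements of `F` has dimension `1 + dim F · dim H`. -/
theorem stmt_6 (K G : Type*) [Field K] [AddCommGroup G] [Module K G]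
    [FiniteDimensional K G] (F : Submodule K G) (m : ℕ)
    (hm : Module.finrank K (G ⧸ F) = m) :
    Module.finrank K (Lambda1 K G F m) = 1 + Module.finrank K F * m := by
  obtain ⟨b, hbF, hF⟩ := F.exists_basis_sum_adapted
  subst hm
  rw [Lambda1.finrank_eq_of_basis hbF hF, Fintype.card_fin]
end

section
/- With notation as above, the linear map Υ: Λ₁ᵐG* → Aff(Σ, ΛᵐH*) defined by Υ(η)(σ) = σ*η (pullback of η along the section σ: H → G) is well-defined, i.e., for each η ∈ Λ₁ᵐG*, the map σ ↦ σ*η is an affine map on the affine space Σ with values in ΛᵐH*. -/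
/-- Expansion lemma: for `η ∈ Λ₁`, adding vectors of `F` to all the arguments
changes `η` by the sum of single-replacement terms. -/
lemma lambda1_expand {K G : Type*} [Field K] [AddCommGroup G] [Module K G]
    {F : Submodule K G} {m : ℕ} {η : G [⋀^Fin m]→ₗ[K] K} (hη : η ∈ Lambda1 K G F m)
    (a f : Fin m → G) (hf : ∀ j, f j ∈ F) :
    η (a + f) = η a + ∑ i, η (Function.update a i (f i)) := by
  have hadd : η (f + a) = ∑ s : Finset (Fin m), η (s.piecewise f a) :=
    η.toMultilinearMap.map_add_univ f a
  rw [add_comm a f, hadd]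
  classical
  set S₁ : Finset (Finset (Fin m)) :=
    insert ∅ (Finset.univ.image ({·} : Fin m → Finset (Fin m))) with hS₁
  have hsub : ∀ s ∈ (Finset.univ : Finset (Finset (Fin m))), s ∉ S₁ →
      η (s.piecewise f a) = 0 := by
    intro s _ hs
    simp only [hS₁, Finset.mem_insert, Finset.mem_image, Finset.mem_univ, true_and,
      not_or, not_exists] at hs
    obtain ⟨hne, hsing⟩ := hs
    have hcard : 1 < s.card := by
      rcases Nat.lt_or_ge 1 s.card with h | h
      · exact h
      · interval_cases h' : s.card
        · exact absurd (Finset.card_eq_zero.mp h') hne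
        · obtain ⟨i, hi⟩ := Finset.card_eq_one.mp h'
          exact absurd hi.symm (hsing i)
    obtain ⟨i, hi, j, hj, hij⟩ := Finset.one_lt_card.mp hcard
    refine hη _ i j hij ?_ ?_
    · simpa [Finset.piecewise_eq_of_mem _ _ _ hi] using hf i
    · simpa [Finset.piecewise_eq_of_mem _ _ _ hj] using hf j
  rw [← Finset.sum_subset (Finset.subset_univ S₁) hsub]
  have hnm : (∅ : Finset (Fin m)) ∉ Finset.univ.image ({·} : Fin m → Finset (Fin m)) := by
    simp
  rw [hS₁, Finset.sum_insert hnm, Finset.piecewise_empty,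
    Finset.sum_image (by intro x _ y _ h; exact Finset.singleton_injective h)]
  congr 1
  exact Finset.sum_congr rfl fun i _ => by rw [Finset.piecewise_singleton]

/-- Single-replacement terms don't change when the other arguments are shifted by `F`. -/
lemma lambda1_indep {K G : Type*} [Field K] [AddCommGroup G] [Module K G]
    {F : Submodule K G} {m : ℕ} {η : G [⋀^Fin m]→ₗ[K] K} (hη : η ∈ Lambda1 K G F m)
    (a b : Fin m → G) (hb : ∀ j, b j ∈ F) (i : Fin m) (u : G) (hu : u ∈ F) :
    η (Function.update (a + b) i u) = η (Function.update a i u) := by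
  classical
  have hsplit : Function.update (a + b) i u
      = Function.update a i u + Function.update b i 0 := by
    funext j
    by_cases h : j = i
    · subst h; simp
    · simp [Function.update_of_ne h]
  rw [hsplit, lambda1_expand hη _ _ (fun j => by
      by_cases h : j = i
      · subst h; simp
      · simpa [Function.update_of_ne h] using hb j)]
  have hz : ∑ j, η (Function.update (Function.update a i u) j
      (Function.update b i 0 j)) = 0 := by
    refine Finset.sum_eq_zero fun j _ => ?_
    by_cases h : j = i
    · subst h; simp [η.map_update_zero]
    · refine hη _ i j (fun hh => h hh.symm) ?_ ?_
      · have he : Function.update (Function.update a i u) j (b j) i = u := by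
          rw [Function.update_of_ne (show i ≠ j from fun hh => h hh.symm),
            Function.update_self]
        rw [show Function.update b i 0 j = b j from Function.update_of_ne h 0 b, he]
        exact hu
      · simpa [Function.update_self, Function.update_of_ne h] using hb j
  rw [hz, add_zero]

/-- For each `η ∈ Λ₁ᵐG*`, the map `σ ↦ σ*η` is an affine map on the affine
space `Σ` of linear sections of `π : G → H` (modeled on `Hom(H,F)`, acting by
`(σ, λ) ↦ σ + τ∘λ`) with values in `ΛᵐH*`: there is a linear map
`L : Hom(H,F) →ₗ ΛᵐH*` with `(σ + τ∘λ)*η = σ*η + L λ` for every section `σ` and every `λ`. -/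
theorem stmt_7 (K G H : Type*) [Field K] [AddCommGroup G] [Module K G]
    [AddCommGroup H] [Module K H] [FiniteDimensional K G] [FiniteDimensional K H]
    (F : Submodule K G) (π : G →ₗ[K] H) (hπ : Function.Surjective π)
    (hker : LinearMap.ker π = F) (m : ℕ) (hm : Module.finrank K H = m)
    (η : G [⋀^Fin m]→ₗ[K] K) (hη : η ∈ Lambda1 K G F m) :
    ∃ L : (H →ₗ[K] F) →ₗ[K] (H [⋀^Fin m]→ₗ[K] K),
      ∀ σ : H →ₗ[K] G, π ∘ₗ σ = LinearMap.id →
        ∀ l : H →ₗ[K] F,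
          η.compLinearMap (σ + F.subtype ∘ₗ l) = η.compLinearMap σ + L l := by
  classical
  obtain ⟨σ₀, hσ₀⟩ := π.exists_rightInverse_of_surjective (LinearMap.range_eq_top.mpr hπ)
  -- key expansion, valid for any section σ
  have key : ∀ (σ : H →ₗ[K] G), π ∘ₗ σ = LinearMap.id → ∀ (l : H →ₗ[K] F)
      (h : Fin m → H),
      η.compLinearMap (σ + F.subtype ∘ₗ l) h
        = η.compLinearMap σ h
          + ∑ i, η (Function.update (fun j => σ₀ (h j)) i (l (h i) : G)) := by
    intro σ hσ l h
    have hcomp : (fun j => (σ + F.subtype ∘ₗ l) (h j))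
        = (fun j => σ (h j)) + fun j => (l (h j) : G) := by
      funext j; simp
    rw [AlternatingMap.compLinearMap_apply, AlternatingMap.compLinearMap_apply, hcomp,
      lambda1_expand hη _ _ (fun j => (l (h j)).2)]
    congr 1
    refine Finset.sum_congr rfl fun i _ => ?_
    have hdiff : (fun j => σ (h j)) = (fun j => σ₀ (h j)) + fun j => (σ - σ₀) (h j) := by
      funext j; simp
    rw [hdiff]
    refine lambda1_indep hη _ _ (fun j => ?_) i _ (l (h i)).2
    · rw [← hker, LinearMap.mem_ker]
      have h1 : π (σ (h j)) = h j := congrArg (fun f => f (h j)) hσ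
      have h2 : π (σ₀ (h j)) = h j := congrArg (fun f => f (h j)) hσ₀
      simp [LinearMap.sub_apply, h1, h2]
  refine ⟨{ toFun := fun l => η.compLinearMap (σ₀ + F.subtype ∘ₗ l) - η.compLinearMap σ₀
            map_add' := ?_
            map_smul' := ?_ }, ?_⟩
  · intro l l'
    ext h
    simp only [AlternatingMap.sub_apply, AlternatingMap.add_apply]
    rw [key σ₀ hσ₀ (l + l') h, key σ₀ hσ₀ l h, key σ₀ hσ₀ l' h]
    have : ∀ i, η (Function.update (fun j => σ₀ (h j)) i (((l + l') (h i)) : G))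
        = η (Function.update (fun j => σ₀ (h j)) i ((l (h i)) : G))
          + η (Function.update (fun j => σ₀ (h j)) i ((l' (h i)) : G)) := by
      intro i
      rw [show (((l + l') (h i)) : G) = ((l (h i)) : G) + ((l' (h i)) : G) by simp]
      exact η.map_update_add _ i _ _
    rw [Finset.sum_congr rfl fun i _ => this i, Finset.sum_add_distrib]
    ring
  · intro c l
    ext h
    simp only [AlternatingMap.sub_apply, AlternatingMap.smul_apply, RingHom.id_apply]
    rw [key σ₀ hσ₀ (c • l) h, key σ₀ hσ₀ l h]
    have : ∀ i, η (Function.update (fun j => σ₀ (h j)) i (((c • l) (h i)) : G))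
        = c • η (Function.update (fun j => σ₀ (h j)) i ((l (h i)) : G)) := by
      intro i
      rw [show (((c • l) (h i)) : G) = c • ((l (h i)) : G) by simp]
      exact η.map_update_smul _ i _ _
    rw [Finset.sum_congr rfl fun i _ => this i, ← Finset.smul_sum]
    simp [smul_sub, smul_add]
  · intro σ hσ l
    ext h
    simp only [AlternatingMap.add_apply, LinearMap.coe_mk, AddHom.coe_mk,
      AlternatingMap.sub_apply]
    rw [key σ hσ l h, key σ₀ hσ₀ l h]
    ring
end

section
/- The map Υ: Λ₁ᵐG* → Aff(Σ, ΛᵐH*), Υ(η)(σ) = σ*η, is injective: if σ*η = 0 for every linear section σ: H → G of π, then η = 0. -/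
/-- The map `Υ : Λ₁ᵐG* → Aff(Σ, ΛᵐH*)`, `Υ(η)(σ) = σ*η`, is injective:
if the pullback `σ*η` vanishes for every linear section `σ : H → G` of `π`, then `η = 0`. -/
theorem stmt_8 (K G H : Type*) [Field K] [AddCommGroup G] [Module K G]
    [AddCommGroup H] [Module K H] [FiniteDimensional K G] [FiniteDimensional K H]
    (F : Submodule K G) (π : G →ₗ[K] H) (hπ : Function.Surjective π)
    (hker : LinearMap.ker π = F) (m : ℕ) (hm : Module.finrank K H = m) (hm1 : 1 ≤ m)
    (η : G [⋀^Fin m]→ₗ[K] K) (hη : η ∈ Lambda1 K G F m)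
    (h0 : ∀ σ : H →ₗ[K] G, π ∘ₗ σ = LinearMap.id → η.compLinearMap σ = 0) :
    η = 0 := by
  classical
  haveI : Nonempty (Fin m) := ⟨⟨0, hm1⟩⟩
  have hη' : ∀ (x : Fin m → G) (i j : Fin m), i ≠ j → x i ∈ F → x j ∈ F → η x = 0 := hη
  -- Expansion lemma
  have expand : ∀ (σ : H →ₗ[K] G), π ∘ₗ σ = LinearMap.id →
      ∀ (a : Fin m → G), (∀ j, a j ∈ F) → ∀ z : Fin m → H,
      η (fun j => a j + σ (z j)) =
        ∑ j, η (Function.update (fun k => σ (z k)) j (a j)) := by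
    intro σ hσ a ha z
    have hb0 : η (fun k => σ (z k)) = 0 := by
      have := h0 σ hσ
      have := congrFun (congrArg (fun f => f.toFun) (congrArg AlternatingMap.toMultilinearMap this)) z
      simpa [AlternatingMap.compLinearMap] using this
    have key : η (a + fun k => σ (z k)) =
        ∑ s : Finset (Fin m), η (s.piecewise a (fun k => σ (z k))) :=
      η.toMultilinearMap.map_add_univ a (fun k => σ (z k))
    have hx : (fun j => a j + σ (z j)) = a + fun k => σ (z k) := rfl
    rw [hx, key]
    -- kill terms of card ≥ 2
    have hbig : ∀ s : Finset (Fin m), 1 < s.card →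
        η (s.piecewise a (fun k => σ (z k))) = 0 := by
      intro s hs
      obtain ⟨i, hi, j, hj, hij⟩ := Finset.one_lt_card.mp hs
      exact hη' _ i j hij (by simp [Finset.piecewise_eq_of_mem _ _ _ hi, ha i])
        (by simp [Finset.piecewise_eq_of_mem _ _ _ hj, ha j])
    have hsubset : (∑ s : Finset (Fin m), η (s.piecewise a (fun k => σ (z k)))) =
        ∑ s ∈ Finset.univ.filter (fun s : Finset (Fin m) => s.card ≤ 1),
          η (s.piecewise a (fun k => σ (z k))) := by
      refine (Finset.sum_subset (Finset.filter_subset _ _) ?_).symm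
      intro s _ hs
      simp only [Finset.mem_filter, Finset.mem_univ, true_and, not_le] at hs
      exact hbig s hs
    rw [hsubset]
    have hset : Finset.univ.filter (fun s : Finset (Fin m) => s.card ≤ 1) =
        insert ∅ (Finset.univ.image fun j : Fin m => ({j} : Finset (Fin m))) := by
      ext s
      simp only [Finset.mem_filter, Finset.mem_univ, true_and, Finset.mem_insert,
        Finset.mem_image]
      constructor
      · intro hs
        rcases Finset.card_le_one_iff_subset_singleton.mp hs with ⟨x, hx'⟩
        rcases Finset.subset_singleton_iff.mp hx' with h | h
        · exact Or.inl h
        · exact Or.inr ⟨x, h.symm⟩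
      · rintro (rfl | ⟨x, rfl⟩) <;> simp
    rw [hset, Finset.sum_insert (by simp), Finset.sum_image (by intro x _ y _ h; simpa using h)]
    simp only [Finset.piecewise_empty, Finset.piecewise_singleton, hb0, zero_add]
  -- fix a section
  obtain ⟨σ0, hσ0⟩ := π.exists_rightInverse_of_surjective (LinearMap.range_eq_top.mpr hπ)
  -- Claim B: single F-slot terms vanish
  have claimB : ∀ u ∈ F, ∀ (z : Fin m → H) (i : Fin m),
      η (Function.update (fun k => σ0 (z k)) i u) = 0 := by
    intro u hu z i
    set s : Set H := z '' {i}ᶜ with hs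
    haveI : Fintype s := (Set.toFinite s).fintype
    have him : s.toFinset ⊆ ({i}ᶜ : Set (Fin m)).toFinset.image z := by
      intro y hy
      rw [Set.mem_toFinset, hs] at hy
      rcases hy with ⟨j, hj, rfl⟩
      exact Finset.mem_image.mpr ⟨j, Set.mem_toFinset.mpr hj, rfl⟩
    have hcard : s.toFinset.card < Module.finrank K H := by
      rw [hm]
      calc s.toFinset.card ≤ (({i}ᶜ : Set (Fin m)).toFinset.image z).card :=
            Finset.card_le_card him
        _ ≤ (({i}ᶜ : Set (Fin m)).toFinset).card := Finset.card_image_le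
        _ < m := by
            have : (({i}ᶜ : Set (Fin m)).toFinset).card = m - 1 := by
              simp [Set.toFinset_compl, Finset.card_compl]
            omega
    have hlt : Submodule.span K s < ⊤ := span_lt_top_of_card_lt_finrank hcard
    obtain ⟨w, -, hw⟩ := SetLike.exists_of_lt hlt
    set S := Submodule.span K s with hS
    have hqw : S.mkQ w ≠ 0 := by
      rw [Submodule.mkQ_apply, Ne, Submodule.Quotient.mk_eq_zero]
      exact hw
    have hφ : ∃ φ : Module.Dual K (H ⧸ S), φ (S.mkQ w) ≠ 0 := by
      by_contra hcon
      push_neg at hcon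
      exact hqw ((Module.forall_dual_apply_eq_zero_iff K _).mp hcon)
    obtain ⟨φ, hφ⟩ := hφ
    set lam : H →ₗ[K] K := (φ (S.mkQ w))⁻¹ • (φ ∘ₗ S.mkQ) with hlam
    have hlamw : lam w = 1 := by
      simp only [hlam, LinearMap.smul_apply, LinearMap.coe_comp, Function.comp_apply,
        smul_eq_mul]
      exact inv_mul_cancel₀ (by simpa using hφ)
    have hlamz : ∀ j, j ≠ i → lam (z j) = 0 := by
      intro j hj
      have hzj : z j ∈ S := Submodule.subset_span ⟨j, hj, rfl⟩
      have : S.mkQ (z j) = 0 := by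
        rw [Submodule.mkQ_apply, Submodule.Quotient.mk_eq_zero]; exact hzj
      simp [hlam, this]
    have hπu : π u = 0 := by rw [← LinearMap.mem_ker, hker]; exact hu
    set σ' : H →ₗ[K] G := σ0 + lam.smulRight u with hσ'
    have hsec : π ∘ₗ σ' = LinearMap.id := by
      ext y
      have h1 : π (σ0 y) = y := congrFun (congrArg (fun f => f.toFun) hσ0) y
      simp [hσ', map_add, h1, hπu]
    set y : Fin m → H := Function.update z i w with hy
    have h1 : η (fun j => (lam (y j) • u) + σ0 (y j)) = 0 := by
      have := h0 σ' hsec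
      have h2 := congrFun (congrArg (fun f => f.toFun)
        (congrArg AlternatingMap.toMultilinearMap this)) y
      have h3 : (fun j => lam (y j) • u + σ0 (y j)) = fun j => σ' (y j) := by
        funext j; simp [hσ']; abel
      rw [h3]
      simpa [AlternatingMap.compLinearMap] using h2
    rw [expand σ0 hσ0 _ (fun j => F.smul_mem _ hu) y] at h1
    have h4 : ∀ j, η (Function.update (fun k => σ0 (y k)) j (lam (y j) • u)) =
        lam (y j) • η (Function.update (fun k => σ0 (y k)) j u) := fun j =>
      η.map_update_smul _ j _ u
    rw [Finset.sum_congr rfl (fun j _ => h4 j)] at h1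
    have h5 : ∀ j ∈ Finset.univ, j ≠ i →
        lam (y j) • η (Function.update (fun k => σ0 (y k)) j u) = 0 := by
      intro j _ hj
      rw [hy, Function.update_of_ne hj, hlamz j hj, zero_smul]
    rw [Finset.sum_eq_single_of_mem i (Finset.mem_univ i) h5] at h1
    have h6 : Function.update (fun k => σ0 (y k)) i u =
        Function.update (fun k => σ0 (z k)) i u := by
      funext k
      by_cases hk : k = i
      · subst hk; simp
      · simp [Function.update_of_ne hk, hy]
    rw [h6, hy] at h1
    simpa [hlamw] using h1
  -- final
  ext x
  have ha : ∀ j, x j - σ0 (π (x j)) ∈ F := by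
    intro j
    rw [← hker, LinearMap.mem_ker]
    have : π (σ0 (π (x j))) = π (x j) := congrFun (congrArg (fun f => f.toFun) hσ0) (π (x j))
    simp [map_sub, this]
  have hx : x = fun j => (x j - σ0 (π (x j))) + σ0 (π (x j)) := by
    funext j; abel
  calc η x = η (fun j => (x j - σ0 (π (x j))) + σ0 (π (x j))) := by rw [← hx]
    _ = ∑ j, η (Function.update (fun k => σ0 (π (x k))) j (x j - σ0 (π (x j)))) :=
        expand σ0 hσ0 _ ha (fun k => π (x k))
    _ = 0 := Finset.sum_eq_zero fun j _ => claimB _ (ha j) (fun k => π (x k)) j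
end

section
/- The map Υ: Λ₁ᵐG* → Aff(Σ, ΛᵐH*), Υ(η)(σ) = σ*η, is a linear isomorphism; in particular Λ₁ᵐG* ≅ Aff(Σ, ΛᵐH*) canonically. -/
open Function Module

namespace AlternatingMap

variable {R M M' N ι : Type*} [CommRing R] [AddCommGroup M] [Module R M] [AddCommGroup M']
  [Module R M'] [AddCommGroup N] [Module R N] [DecidableEq ι]

theorem map_update_basis (e : Basis ι R M) (ω : M [⋀^ι]→ₗ[R] N) (i : ι) (x : M) :
    ω (update e i x) = e.coord i x • ω e := by
  have h : ω.toMultilinearMap.toLinearMap e i = (e.coord i).smulRight (ω e) := by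
    refine e.ext fun k => ?_
    rcases eq_or_ne k i with rfl | hki
    · simp
    · simp only [MultilinearMap.toLinearMap_apply, coe_multilinearMap, LinearMap.smulRight_apply,
        Basis.coord_apply, Basis.repr_self]
      rw [Finsupp.single_eq_of_ne' hki, zero_smul]
      exact ω.map_eq_zero_of_eq _ (i := i) (j := k) (by simp [hki]) hki.symm
  simpa using LinearMap.congr_fun h x

variable [Fintype ι]

theorem sum_map_update_comp_eq_zero (ω : M [⋀^ι]→ₗ[R] N) (p q : M' →ₗ[R] M) {g : ι → M'}
    {i j : ι} (hg : g i = g j) (hij : i ≠ j) :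
    ∑ k, ω (update (p ∘ g) k (q (g k))) = 0 := by
  have hswap : update (p ∘ g) i (q (g i)) ∘ Equiv.swap i j = update (p ∘ g) j (q (g j)) := by
    rw [update_comp_equiv, Equiv.symm_swap, Equiv.swap_apply_left, hg]
    congr 1
    exact funext (Equiv.apply_swap_eq_self (v := p ∘ g) (congrArg p hg))
  rw [Finset.sum_eq_add i j hij (fun k _ hk => ?_) (by simp) (by simp), ← hswap, ω.map_swap _ hij,
    add_neg_cancel]
  exact ω.map_eq_zero_of_eq _ (by simp [Ne.symm hk.1, Ne.symm hk.2, hg]) hij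

/-- `ω.compLinearMapDeriv p q`, written `D_p ω q` above, is the derivative of
`t ↦ ω.compLinearMap (p + t • q)` at `t = 0`. -/
def compLinearMapDeriv (ω : M [⋀^ι]→ₗ[R] N) (p : M' →ₗ[R] M) :
    (M' →ₗ[R] M) →ₗ[R] M' [⋀^ι]→ₗ[R] N where
  toFun q :=
    { toMultilinearMap := ∑ k, ω.toMultilinearMap.compLinearMap (update (fun _ => p) k q)
      map_eq_zero_of_eq' := fun g i j hg hij => by
        convert ω.sum_map_update_comp_eq_zero p q hg hij using 1
        simp [apply_update (fun j (f : M' →ₗ[R] M) => f (g j))]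
        rfl }
  map_add' q q' := by
    ext g
    simp [apply_update (fun j (f : M' →ₗ[R] M) => f (g j)), ← Finset.sum_add_distrib]
  map_smul' c q := by
    ext g
    simp [apply_update (fun j (f : M' →ₗ[R] M) => f (g j)), Finset.smul_sum]

theorem compLinearMapDeriv_apply (ω : M [⋀^ι]→ₗ[R] N) (p q : M' →ₗ[R] M) (g : ι → M') :
    ω.compLinearMapDeriv p q g = ∑ k, ω (update (p ∘ g) k (q (g k))) := by
  simp [compLinearMapDeriv, apply_update (fun j (f : M' →ₗ[R] M) => f (g j))]
  rfl

theorem compLinearMapDeriv_compLinearMap {M'' : Type*} [AddCommGroup M''] [Module R M'']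
    (ω : M [⋀^ι]→ₗ[R] N) (p q : M' →ₗ[R] M) (σ : M'' →ₗ[R] M') :
    (ω.compLinearMapDeriv p q).compLinearMap σ = ω.compLinearMapDeriv (p ∘ₗ σ) (q ∘ₗ σ) := by
  ext g
  simp only [compLinearMap_apply, compLinearMapDeriv_apply]
  rfl

theorem compLinearMapDeriv_id (e : Basis ι R M) (ω : M [⋀^ι]→ₗ[R] R) (A : M →ₗ[R] M) :
    ω.compLinearMapDeriv LinearMap.id A = LinearMap.trace R M A • ω := by
  rw [eq_smul_basis_det e (ω.compLinearMapDeriv _ A), eq_smul_basis_det e (_ • ω)]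
  congr 1
  simp [compLinearMapDeriv_apply, map_update_basis e, LinearMap.trace_eq_matrix_trace R e,
    Matrix.trace, LinearMap.toMatrix_apply, Finset.sum_mul]

end AlternatingMap

theorem LinearMap.exists_trace_comp_eq {K V W : Type*} [Field K] [AddCommGroup V] [Module K V]
    [AddCommGroup W] [Module K W] [FiniteDimensional K V] [FiniteDimensional K W]
    (c : Dual K (V →ₗ[K] W)) : ∃ E : W →ₗ[K] V, ∀ l, trace K V (E ∘ₗ l) = c l := by
  let Φ : (W →ₗ[K] V) →ₗ[K] Dual K (V →ₗ[K] W) := (llcomp K V W V).compr₂ (trace K V)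
  have hΦ : Injective Φ := by
    refine (injective_iff_map_eq_zero Φ).mpr fun E hE => LinearMap.ext fun w => ?_
    refine (forall_dual_apply_eq_zero_iff K (E w)).mp fun f => ?_
    have hcomp : E ∘ₗ f.smulRight w = f.smulRight (E w) := by ext; simp
    simpa [Φ, llcomp_apply', hcomp, trace_smulRight] using LinearMap.congr_fun hE (f.smulRight w)
  have hrank : finrank K (W →ₗ[K] V) = finrank K (Dual K (V →ₗ[K] W)) := by
    rw [Subspace.dual_finrank_eq, finrank_linearMap, finrank_linearMap, mul_comm]
  obtain ⟨E, hE⟩ := (injective_iff_surjective_of_finrank_eq_finrank hrank).mp hΦ c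
  exact ⟨E, fun l => LinearMap.congr_fun hE l⟩

theorem LinearMap.sub_apply_mem_ker_of_comp_eq {R M G H : Type*} [CommRing R] [AddCommGroup M]
    [Module R M] [AddCommGroup G] [Module R G] [AddCommGroup H] [Module R H] {π : G →ₗ[R] H}
    {f g : M →ₗ[R] G} (h : π ∘ₗ f = π ∘ₗ g) (x : M) : f x - g x ∈ ker π := by
  rw [mem_ker, map_sub, sub_eq_zero]
  exact LinearMap.congr_fun h x

theorem LinearMap.sub_apply_comp_mem_ker {R G H : Type*} [CommRing R] [AddCommGroup G]
    [Module R G] [AddCommGroup H] [Module R H] {π : G →ₗ[R] H} {σ : H →ₗ[R] G}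
    (hσ : π ∘ₗ σ = LinearMap.id) (x : G) : x - σ (π x) ∈ ker π :=
  sub_apply_mem_ker_of_comp_eq (f := LinearMap.id) (g := σ ∘ₗ π)
    (by rw [← LinearMap.comp_assoc, hσ, LinearMap.id_comp, LinearMap.comp_id]) x

theorem AlternatingMap.map_update_comp_eq_zero {K G H N ι : Type*} [Field K] [AddCommGroup G]
    [Module K G] [AddCommGroup H] [Module K H] [FiniteDimensional K H] [AddCommGroup N]
    [Module K N] [Fintype ι] [DecidableEq ι] (hι : finrank K H = Fintype.card ι)
    (ω : G [⋀^ι]→ₗ[K] N) (σ : H →ₗ[K] G) (x : G)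
    (h : ∀ f : Dual K H, ω.compLinearMapDeriv σ (f.smulRight x) = 0) (y : ι → H) (i : ι) :
    ω (update (σ ∘ y) i x) = 0 := by
  set p := Submodule.span K (Set.range fun j : {j // j ≠ i} => y j)
  have hp : p < ⊤ := by
    refine Submodule.lt_top_of_finrank_lt_finrank ((finrank_range_le_card _).trans_lt ?_)
    rw [hι, Fintype.card_subtype_compl, Fintype.card_subtype_eq]
    exact Nat.sub_lt (Fintype.card_pos_iff.mpr ⟨i⟩) one_pos
  -- a functional killing the `y j` with `j ≠ i` leaves only the `i`-th term of the derivative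
  obtain ⟨f, hf0, hpf⟩ := p.exists_le_ker_of_lt_top hp
  obtain ⟨w, hw⟩ : ∃ w, f w ≠ 0 := by
    by_contra! hf
    exact hf0 (LinearMap.ext hf)
  have hfy : ∀ j ≠ i, f (y j) = 0 := fun j hj =>
    hpf (Submodule.subset_span ⟨⟨j, hj⟩, rfl⟩)
  have := congrArg (· (update y i w)) (h f)
  simp only [compLinearMapDeriv_apply, AlternatingMap.zero_apply] at this
  rw [Finset.sum_eq_single i (fun j _ hj => ω.map_coord_zero j (by simp [hj, hfy j hj]))
    (by simp)] at this
  simpa [comp_update, ω.map_update_smul, hw] using this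

namespace Lambda1

open AlternatingMap LinearMap

variable {K G H : Type*} [Field K] [AddCommGroup G] [Module K G] [AddCommGroup H] [Module K H]
  {F : Submodule K G} {m : ℕ} {η : G [⋀^Fin m]→ₗ[K] K}

theorem apply_add (hη : η ∈ Lambda1 K G F m) (x f : Fin m → G) (hf : ∀ i, f i ∈ F) :
    η (x + f) = η x + ∑ i, η (update x i (f i)) := by
  set S := insert ∅ (Finset.univ.image fun i : Fin m => ({i} : Finset (Fin m)))
  have hvanish : ∀ s ∈ Finset.univ, s ∉ S → η (s.piecewise f x) = 0 := by
    intro s _ hs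
    obtain ⟨i, hi, j, hj, hij⟩ : s.Nontrivial := by
      rcases s.eq_empty_or_nonempty with rfl | hne
      · simp [S] at hs
      · exact hne.exists_eq_singleton_or_nontrivial.resolve_left fun ⟨a, ha⟩ => hs (by simp [S, ha])
    exact hη _ i j hij (by rw [s.piecewise_eq_of_mem _ _ hi]; exact hf i)
      (by rw [s.piecewise_eq_of_mem _ _ hj]; exact hf j)
  rw [add_comm x, η.map_add_univ, ← Finset.sum_subset (Finset.subset_univ S) hvanish,
    Finset.sum_insert (by simp), Finset.sum_image fun _ _ _ _ h => Finset.singleton_injective h]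
  simp [Finset.piecewise_singleton]

theorem compLinearMap_add (hη : η ∈ Lambda1 K G F m) (σ q : H →ₗ[K] G) (hq : ∀ y, q y ∈ F) :
    η.compLinearMap (σ + q) = η.compLinearMap σ + η.compLinearMapDeriv σ q := by
  ext y
  rw [AlternatingMap.add_apply, compLinearMap_apply, compLinearMap_apply, compLinearMapDeriv_apply]
  exact apply_add hη (σ ∘ y) (q ∘ y) fun i => hq (y i)

theorem compLinearMapDeriv_add_left (hη : η ∈ Lambda1 K G F m) (σ d q : H →ₗ[K] G)
    (hd : ∀ y, d y ∈ F) (hq : ∀ y, q y ∈ F) :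
    η.compLinearMapDeriv (σ + d) q = η.compLinearMapDeriv σ q := by
  have h := compLinearMap_add hη σ (d + q) fun y => F.add_mem (hd y) (hq y)
  rw [← add_assoc, compLinearMap_add hη _ q hq, compLinearMap_add hη σ d hd, map_add,
    add_assoc] at h
  exact add_left_cancel (add_left_cancel h)

variable {π : G →ₗ[K] H}

theorem compLinearMap_mem (hF : F ≤ ker π) (ω : H [⋀^Fin m]→ₗ[K] K) :
    ω.compLinearMap π ∈ Lambda1 K G F m :=
  fun _ i _ _ hi _ => ω.map_coord_zero i (hF hi)

theorem compLinearMapDeriv_mem (hF : F ≤ ker π) (ω : H [⋀^Fin m]→ₗ[K] K) (q : G →ₗ[K] H) :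
    ω.compLinearMapDeriv π q ∈ Lambda1 K G F m := by
  intro x i j hij hi hj
  rw [compLinearMapDeriv_apply]
  refine Finset.sum_eq_zero fun k _ => ?_
  rcases eq_or_ne k i with rfl | hki
  · exact ω.map_coord_zero j (by simpa [update_of_ne hij.symm] using hF hj)
  · exact ω.map_coord_zero i (by simpa [update_of_ne hki.symm] using hF hi)

theorem eq_zero_of_forall_compLinearMap_eq_zero [FiniteDimensional K H]
    (hη : η ∈ Lambda1 K G F m) (hker : ker π = F) {σ₀ : H →ₗ[K] G} (hσ₀ : π ∘ₗ σ₀ = LinearMap.id)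
    (hm : finrank K H = m) (h : ∀ σ, π ∘ₗ σ = LinearMap.id → η.compLinearMap σ = 0) : η = 0 := by
  have hD : ∀ q : H →ₗ[K] G, (∀ y, q y ∈ F) → η.compLinearMapDeriv σ₀ q = 0 := by
    intro q hq
    have hπq : π ∘ₗ q = 0 := LinearMap.ext fun y => by simpa [← hker] using hq y
    have := compLinearMap_add hη σ₀ q hq
    rwa [h σ₀ hσ₀, h _ (by rw [comp_add, hσ₀, hπq, add_zero]), zero_add, eq_comm] at this
  have hupd : ∀ y i, ∀ x ∈ F, η (update (σ₀ ∘ y) i x) = 0 := fun y i x hx =>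
    map_update_comp_eq_zero (by simp [hm]) η σ₀ x
      (fun f => hD _ fun y => F.smul_mem (f y) hx) y i
  have hρ : ∀ g, (LinearMap.id - σ₀ ∘ₗ π : G →ₗ[K] G) g ∈ F :=
    hker ▸ sub_apply_comp_mem_ker hσ₀
  have hsplit := compLinearMap_add hη (σ₀ ∘ₗ π) _ hρ
  rw [add_sub_cancel, compLinearMap_id, ← compLinearMap_assoc, h σ₀ hσ₀, zero_compLinearMap,
    zero_add] at hsplit
  rw [hsplit]
  ext g
  rw [compLinearMapDeriv_apply]
  exact Finset.sum_eq_zero fun i _ => hupd (π ∘ g) i _ (hρ _)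

theorem compLinearMap_add_subtype_comp (hη : η ∈ Lambda1 K G F m) {σ σ₀ : H →ₗ[K] G}
    (hσ : ∀ y, σ y - σ₀ y ∈ F) (l : H →ₗ[K] F) :
    η.compLinearMap (σ + F.subtype ∘ₗ l) =
      η.compLinearMap σ + η.compLinearMapDeriv σ₀ (F.subtype ∘ₗ l) := by
  rw [compLinearMap_add hη σ _ fun y => (l y).2,
    ← compLinearMapDeriv_add_left hη σ₀ (σ - σ₀) _ hσ fun y => (l y).2, add_sub_cancel]

theorem exists_compLinearMap_add_eq [FiniteDimensional K G] [FiniteDimensional K H]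
    (hker : ker π = F) {σ₀ : H →ₗ[K] G} (hσ₀ : π ∘ₗ σ₀ = LinearMap.id) (hm : finrank K H = m)
    (ω₀ : H [⋀^Fin m]→ₗ[K] K) (L : (H →ₗ[K] F) →ₗ[K] H [⋀^Fin m]→ₗ[K] K) :
    ∃ η ∈ Lambda1 K G F m, ∀ l : H →ₗ[K] F,
      η.compLinearMap (σ₀ + F.subtype ∘ₗ l) = ω₀ + L l := by
  let e := finBasisOfFinrankEq K H hm
  obtain ⟨E, hE⟩ := LinearMap.exists_trace_comp_eq
    { toFun := fun l => L l e, map_add' := by simp, map_smul' := by simp }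
  have hρ : ∀ g, (LinearMap.id - σ₀ ∘ₗ π : G →ₗ[K] G) g ∈ F :=
    hker ▸ sub_apply_comp_mem_ker hσ₀
  let ρ : G →ₗ[K] F := (LinearMap.id - σ₀ ∘ₗ π).codRestrict F hρ
  refine ⟨ω₀.compLinearMap π + e.det.compLinearMapDeriv π (E ∘ₗ ρ),
    add_mem (compLinearMap_mem hker.ge ω₀) (compLinearMapDeriv_mem hker.ge _ _), fun l => ?_⟩
  have hπσ₀ : ∀ y, π (σ₀ y) = y := LinearMap.congr_fun hσ₀
  have hπF : ∀ x : F, π x = 0 := fun x => by simpa [← hker] using x.2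
  have hπσ : π ∘ₗ (σ₀ + F.subtype ∘ₗ l) = LinearMap.id := by
    ext y
    simp [hπσ₀, hπF]
  have hρσ : ρ ∘ₗ (σ₀ + F.subtype ∘ₗ l) = l := by
    ext y
    simp [ρ, hπσ₀, hπF]
  rw [add_compLinearMap, compLinearMap_assoc, hπσ, compLinearMap_id,
    compLinearMapDeriv_compLinearMap, hπσ, LinearMap.comp_assoc, hρσ, compLinearMapDeriv_id e, hE]
  conv_rhs => rw [eq_smul_basis_det e (L l)]
  rfl

end Lambda1

theorem stmt_9_general (K G H : Type*) [Field K] [AddCommGroup G] [Module K G]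
    [AddCommGroup H] [Module K H] [FiniteDimensional K G] [FiniteDimensional K H]
    (F : Submodule K G) (π : G →ₗ[K] H) (hπ : Function.Surjective π)
    (hker : LinearMap.ker π = F) (m : ℕ) (hm : Module.finrank K H = m) :
    ∃ U : (Lambda1 K G F m) →ₗ[K]
        ({σ : H →ₗ[K] G // π ∘ₗ σ = LinearMap.id} → (H [⋀^Fin m]→ₗ[K] K)),
      (∀ (η : Lambda1 K G F m) (σ : {σ : H →ₗ[K] G // π ∘ₗ σ = LinearMap.id}),
        U η σ = AlternatingMap.compLinearMap (η : G [⋀^Fin m]→ₗ[K] K) σ.val) ∧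
      Function.Injective U ∧
      Set.range U = {φ | ∃ L : (H →ₗ[K] F) →ₗ[K] (H [⋀^Fin m]→ₗ[K] K),
        ∀ (σ σ' : {σ : H →ₗ[K] G // π ∘ₗ σ = LinearMap.id}) (l : H →ₗ[K] F),
          σ'.val = σ.val + F.subtype ∘ₗ l → φ σ' = φ σ + L l} := by
  obtain ⟨σ₀, hσ₀⟩ := π.exists_rightInverse_of_surjective (LinearMap.range_eq_top.mpr hπ)
  have hsub : ∀ σ σ' : {σ : H →ₗ[K] G // π ∘ₗ σ = LinearMap.id}, ∀ y, σ.val y - σ'.val y ∈ F :=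
    fun σ σ' => hker ▸ LinearMap.sub_apply_mem_ker_of_comp_eq (σ.2.trans σ'.2.symm)
  let U : Lambda1 K G F m →ₗ[K]
      ({σ : H →ₗ[K] G // π ∘ₗ σ = LinearMap.id} → (H [⋀^Fin m]→ₗ[K] K)) :=
    { toFun := fun η σ => (η : G [⋀^Fin m]→ₗ[K] K).compLinearMap σ.val
      map_add' := fun _ _ => funext fun _ => AlternatingMap.add_compLinearMap _ _ _
      map_smul' := fun _ _ => funext fun _ => by ext; simp }
  have hU : Function.Injective U := LinearMap.ker_eq_bot.mp <| LinearMap.ker_eq_bot'.mpr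
    fun η hη => Subtype.ext <| Lambda1.eq_zero_of_forall_compLinearMap_eq_zero η.2 hker hσ₀ hm
      fun σ hσ => congrFun hη ⟨σ, hσ⟩
  refine ⟨U, fun _ _ => rfl, hU, Set.ext fun φ => ⟨?_, ?_⟩⟩
  · rintro ⟨η, rfl⟩
    refine ⟨(η : G [⋀^Fin m]→ₗ[K] K).compLinearMapDeriv σ₀ ∘ₗ F.subtype.compRight K,
      fun σ σ' l hσ' => ?_⟩
    simpa [U, hσ'] using Lambda1.compLinearMap_add_subtype_comp η.2 (hsub σ ⟨σ₀, hσ₀⟩) l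
  · rintro ⟨L, hL⟩
    obtain ⟨η, hη, hηL⟩ := Lambda1.exists_compLinearMap_add_eq hker hσ₀ hm (φ ⟨σ₀, hσ₀⟩) L
    refine ⟨⟨η, hη⟩, funext fun σ => ?_⟩
    let l : H →ₗ[K] F := (σ.val - σ₀).codRestrict F (hsub σ ⟨σ₀, hσ₀⟩)
    have hσl : σ.val = σ₀ + F.subtype ∘ₗ l := by ext; simp [l]
    show η.compLinearMap σ.val = φ σ
    rw [hL ⟨σ₀, hσ₀⟩ σ l hσl, hσl, hηL]

/-- The map `Υ : Λ₁ᵐG* → Aff(Σ, ΛᵐH*)`, `Υ(η)(σ) = σ*η`, is a linear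
isomorphism onto the space of affine maps `Σ → ΛᵐH*` (where `Σ` is the affine space of linear
sections of `π`, modeled on `Hom(H,F)` via `(σ,λ) ↦ σ + τ∘λ`): `Υ` is linear, injective, and
its range is exactly the set of affine maps. -/
theorem stmt_9 (K G H : Type*) [Field K] [AddCommGroup G] [Module K G]
    [AddCommGroup H] [Module K H] [FiniteDimensional K G] [FiniteDimensional K H]
    (F : Submodule K G) (π : G →ₗ[K] H) (hπ : Function.Surjective π)
    (hker : LinearMap.ker π = F) (m : ℕ) (hm : Module.finrank K H = m) (hm1 : 1 ≤ m) :
    ∃ U : (Lambda1 K G F m) →ₗ[K]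
        ({σ : H →ₗ[K] G // π ∘ₗ σ = LinearMap.id} → (H [⋀^Fin m]→ₗ[K] K)),
      (∀ (η : Lambda1 K G F m) (σ : {σ : H →ₗ[K] G // π ∘ₗ σ = LinearMap.id}),
        U η σ = AlternatingMap.compLinearMap (η : G [⋀^Fin m]→ₗ[K] K) σ.val) ∧
      Function.Injective U ∧
      Set.range U = {φ | ∃ L : (H →ₗ[K] F) →ₗ[K] (H [⋀^Fin m]→ₗ[K] K),
        ∀ (σ σ' : {σ : H →ₗ[K] G // π ∘ₗ σ = LinearMap.id}) (l : H →ₗ[K] F),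
          σ'.val = σ.val + F.subtype ∘ₗ l → φ σ' = φ σ + L l} :=
  stmt_9_general K G H F π hπ hker m hm
end

section
/- Under the isomorphism Υ: Λ₁ᵐG* ≅ Aff(Σ, ΛᵐH*), the subspace Λ₀ᵐG* of semibasic forms corresponds exactly to the constant affine maps, i.e., Υ(Λ₀ᵐG*) = {φ ∈ Aff(Σ, ΛᵐH*) : φ̂ = 0}. -/
/-- `Λ₀ᵐG* = π*(ΛᵐH*)`: the semibasic `m`-forms on `G`, i.e. those pulled back from `H`
along the projection `π`. -/
def Lambda0 (K G H : Type*) [Field K] [AddCommGroup G] [Module K G]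
    [AddCommGroup H] [Module K H] (π : G →ₗ[K] H) (m : ℕ) :
    Submodule K (G [⋀^Fin m]→ₗ[K] K) where
  carrier := {α | ∃ β : H [⋀^Fin m]→ₗ[K] K, α = β.compLinearMap π}
  add_mem' := by
    rintro a b ⟨βa, rfl⟩ ⟨βb, rfl⟩
    exact ⟨βa + βb, (AlternatingMap.add_compLinearMap βa βb π).symm⟩
  zero_mem' := ⟨0, (AlternatingMap.zero_compLinearMap π).symm⟩
  smul_mem' := by
    rintro c a ⟨β, rfl⟩
    refine ⟨c • β, ?_⟩
    ext v
    simp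

/-!
Fix a section `σ₀` and write every vector as `x = σ₀ (π x) + f` with `f ∈ F`. Expanding
`η x` multilinearly, the terms with two arguments in `F` vanish because `η ∈ Λ₁`, and besides
`η (σ₀ ∘ π ∘ x)` only terms with a single argument `u ∈ F` remain, all other arguments lying
in the image of `σ₀`. Such a term is killed by comparing `σ₀` with the section `σ₀ + τ ⊗ u`,
where `τ ≠ 0` is a linear form vanishing on the other `m - 1` projected arguments: evaluated at
those arguments together with some `w` where `τ w ≠ 0`, the two pullbacks differ by exactly
`τ w` times the term.
-/

section

variable {K G H N ι : Type*} [Field K] [AddCommGroup G] [Module K G]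
  [AddCommGroup H] [Module K H] [AddCommGroup N] [Module K N]

theorem exists_dual_ne_zero_forall_eq_zero_of_card_lt_finrank [Fintype ι] (v : ι → H)
    (hcard : Fintype.card ι < Module.finrank K H) :
    ∃ τ : Module.Dual K H, τ ≠ 0 ∧ ∀ j, τ (v j) = 0 := by
  have hspan : Submodule.span K (Set.range v) < ⊤ :=
    Submodule.lt_top_of_finrank_lt_finrank ((finrank_range_le_card v).trans_lt hcard)
  obtain ⟨τ, hτ, hle⟩ := (Submodule.span K (Set.range v)).exists_le_ker_of_lt_top hspan
  exact ⟨τ, hτ, fun j => hle (Submodule.subset_span ⟨j, rfl⟩)⟩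

theorem AlternatingMap.compLinearMap_of_comp_eq_id (β : H [⋀^ι]→ₗ[K] N) {π : G →ₗ[K] H}
    {σ : H →ₗ[K] G} (hσ : π ∘ₗ σ = LinearMap.id) :
    (β.compLinearMap π).compLinearMap σ = β := by
  rw [AlternatingMap.compLinearMap_assoc, hσ, AlternatingMap.compLinearMap_id]

variable [Fintype ι] [DecidableEq ι] {π : G →ₗ[K] H} {η : G [⋀^ι]→ₗ[K] N}

theorem AlternatingMap.apply_update_section_ker_eq_zero
    (hcard : Fintype.card ι ≤ Module.finrank K H)
    (hconst : ∀ σ σ' : H →ₗ[K] G, π ∘ₗ σ = LinearMap.id → π ∘ₗ σ' = LinearMap.id →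
      η.compLinearMap σ = η.compLinearMap σ')
    {σ₀ : H →ₗ[K] G} (hσ₀ : π ∘ₗ σ₀ = LinearMap.id) (h : ι → H) (i : ι)
    {u : G} (hu : u ∈ LinearMap.ker π) :
    η (Function.update (σ₀ ∘ h) i u) = 0 := by
  have hcard' : Fintype.card {j // j ≠ i} < Module.finrank K H := by
    have := Fintype.card_pos_iff.2 ⟨i⟩
    simp only [Fintype.card_subtype_compl, Fintype.card_unique]
    omega
  obtain ⟨τ, hτ, hτh⟩ :=
    exists_dual_ne_zero_forall_eq_zero_of_card_lt_finrank (fun j : {j // j ≠ i} => h j) hcard'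
  obtain ⟨w, hw⟩ := DFunLike.ne_iff.1 hτ
  have hσ : π ∘ₗ (σ₀ + τ.smulRight u) = LinearMap.id := by
    ext v
    simp [LinearMap.mem_ker.1 hu, ← LinearMap.comp_apply π σ₀, hσ₀]
  have hupdate : (σ₀ + τ.smulRight u) ∘ Function.update h i w =
      Function.update (σ₀ ∘ h) i (σ₀ w + τ w • u) := by
    ext j
    rcases eq_or_ne j i with rfl | hj
    · simp
    · simp [Function.update_of_ne hj, hτh ⟨j, hj⟩]
  have heq := congr($(hconst σ₀ _ hσ₀ hσ) (Function.update h i w))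
  simp only [AlternatingMap.compLinearMap_apply, hupdate, ← Function.comp_def,
    Function.comp_update, AlternatingMap.map_update_add, AlternatingMap.map_update_smul,
    left_eq_add] at heq
  exact (smul_eq_zero.1 heq).resolve_left hw

theorem AlternatingMap.eq_compLinearMap_section_comp
    (hcard : Fintype.card ι ≤ Module.finrank K H)
    (hη : ∀ (x : ι → G) (i j : ι), i ≠ j → x i ∈ LinearMap.ker π → x j ∈ LinearMap.ker π →
      η x = 0)
    (hconst : ∀ σ σ' : H →ₗ[K] G, π ∘ₗ σ = LinearMap.id → π ∘ₗ σ' = LinearMap.id →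
      η.compLinearMap σ = η.compLinearMap σ')
    {σ₀ : H →ₗ[K] G} (hσ₀ : π ∘ₗ σ₀ = LinearMap.id) :
    η = (η.compLinearMap σ₀).compLinearMap π := by
  ext x
  set y : ι → G := σ₀ ∘ π ∘ x
  set f : ι → G := x - y
  have hf : ∀ j, f j ∈ LinearMap.ker π := fun j => by
    simp [f, y, ← LinearMap.comp_apply π σ₀, hσ₀]
  have hterm : ∀ s : Finset ι, s ≠ ∅ → η (s.piecewise f y) = 0 := by
    intro s hs
    obtain ⟨i, rfl⟩ | ⟨i, hi, j, hj, hij⟩ :=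
      (Finset.nonempty_iff_ne_empty.2 hs).exists_eq_singleton_or_nontrivial
    · rw [Finset.piecewise_singleton]
      exact η.apply_update_section_ker_eq_zero hcard hconst hσ₀ _ i (hf i)
    · exact hη _ i j hij (by simpa [Finset.piecewise_eq_of_mem _ _ _ hi] using hf i)
        (by simpa [Finset.piecewise_eq_of_mem _ _ _ hj] using hf j)
  calc η x = η (f + y) := by rw [sub_add_cancel]
    _ = η (Finset.piecewise ∅ f y) := by
      rw [η.map_add_univ, Finset.sum_eq_single ∅ (fun s _ hs => hterm s hs) (by simp)]
    _ = (η.compLinearMap σ₀).compLinearMap π x := by simp [y, Function.comp_def]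

end

theorem stmt_13_general (K G H : Type*) [Field K] [AddCommGroup G] [Module K G]
    [AddCommGroup H] [Module K H]
    (F : Submodule K G) (π : G →ₗ[K] H) (hπ : Function.Surjective π)
    (hker : LinearMap.ker π = F) (m : ℕ) (hm : Module.finrank K H = m)
    (η : G [⋀^Fin m]→ₗ[K] K) (hη : η ∈ Lambda1 K G F m) :
    η ∈ Lambda0 K G H π m ↔
      ∀ σ σ' : H →ₗ[K] G, π ∘ₗ σ = LinearMap.id → π ∘ₗ σ' = LinearMap.id →
        η.compLinearMap σ = η.compLinearMap σ' := by
  subst hker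
  constructor
  · rintro ⟨β, rfl⟩ σ σ' hσ hσ'
    rw [β.compLinearMap_of_comp_eq_id hσ, β.compLinearMap_of_comp_eq_id hσ']
  · intro hconst
    obtain ⟨σ₀, hσ₀⟩ := π.exists_rightInverse_of_surjective (LinearMap.range_eq_top.2 hπ)
    exact ⟨_, η.eq_compLinearMap_section_comp (by simp [hm]) hη hconst hσ₀⟩

/-- Under the isomorphism `Υ : Λ₁ᵐG* ≅ Aff(Σ, ΛᵐH*)`, `Υ(η)(σ) = σ*η`,
the subspace `Λ₀ᵐG*` of semibasic forms corresponds exactly to the constant affine maps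
(those with vanishing linear part): for `η ∈ Λ₁ᵐG*`, `η` is semibasic iff `σ ↦ σ*η`
is constant on the affine space `Σ` of linear sections of `π`. -/
theorem stmt_13 (K G H : Type*) [Field K] [AddCommGroup G] [Module K G]
    [AddCommGroup H] [Module K H] [FiniteDimensional K G] [FiniteDimensional K H]
    (F : Submodule K G) (π : G →ₗ[K] H) (hπ : Function.Surjective π)
    (hker : LinearMap.ker π = F) (m : ℕ) (hm : Module.finrank K H = m) (hm1 : 1 ≤ m)
    (η : G [⋀^Fin m]→ₗ[K] K) (hη : η ∈ Lambda1 K G F m) :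
    η ∈ Lambda0 K G H π m ↔
      ∀ σ σ' : H →ₗ[K] G, π ∘ₗ σ = LinearMap.id → π ∘ₗ σ' = LinearMap.id →
        η.compLinearMap σ = η.compLinearMap σ' :=
  stmt_13_general K G H F π hπ hker m hm η hη
end

section
/- Let G be a finite-dimensional vector space with subspace F of dimension r and quotient π: G → H of dimension m. If (f_1,…,f_r) is a basis of F extended by (g_1,…,g_m) to a basis of G, with dual basis (f^1,…,f^r,g^1,…,g^m), then Λ₁ᵐG* is spanned by g^1∧…∧g^m together with the forms f^j ∧ g^{i₁} ∧ … ∧ g^{i_{m−1}} for 1 ≤ j ≤ r and 1 ≤ i₁ < … < i_{m−1} ≤ m. -/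
set_option linter.unusedSectionVars false
set_option maxHeartbeats 1000000
set_option maxRecDepth 10000

/-- The wedge `c 0 ∧ c 1 ∧ … ∧ c (m-1)` of `m` covectors on `G`, as the alternating `m`-form
`x ↦ det (c i (x j))`. -/
noncomputable def wedgeDual (K G : Type*) [Field K] [AddCommGroup G] [Module K G]
    {m : ℕ} (c : Fin m → Module.Dual K G) : G [⋀^Fin m]→ₗ[K] K :=
  (Matrix.detRowAlternating : (Fin m → K) [⋀^Fin m]→ₗ[K] K).compLinearMap (LinearMap.pi c)

theorem aux14_mem_Lambda1 {K G : Type*} [Field K] [AddCommGroup G] [Module K G]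
    {F : Submodule K G} {m : ℕ} {α : G [⋀^Fin m]→ₗ[K] K} :
    α ∈ Lambda1 K G F m ↔
      ∀ (x : Fin m → G) (i j : Fin m), i ≠ j → x i ∈ F → x j ∈ F → α x = 0 :=
  Iff.rfl

theorem aux14_det_rows_dep (K : Type*) [Field K] {m : ℕ} (ρ : Fin m → Fin m → K) (i j : Fin m)
    (hij : i ≠ j) (v : Fin m → K) (a c : K) (hi : ρ i = a • v) (hj : ρ j = c • v) :
    Matrix.det (Matrix.of ρ) = 0 := by
  show Matrix.detRowAlternating (R := K) (n := Fin m) ρ = 0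
  have h1 : ρ = Function.update ρ j (c • v) := by rw [← hj, Function.update_eq_self]
  rw [h1, AlternatingMap.map_update_smul]
  have h2 : Function.update ρ j v = Function.update (Function.update ρ j v) i (a • v) := by
    rw [← Function.update_eq_self i (Function.update ρ j v)]
    simp [Function.update_of_ne hij, hi]
  rw [h2, AlternatingMap.map_update_smul]
  rw [Matrix.detRowAlternating.map_eq_zero_of_eq _ (i := i) (j := j) ?_ hij]
  · simp
  · simp [Function.update_of_ne hij.symm, Function.update_of_ne hij]

theorem aux14_strictMono_fin_id {m : ℕ} {t : Fin m → Fin m} (ht : StrictMono t) : t = id := by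
  have hsurj : Function.Surjective t := Finite.injective_iff_surjective.mp ht.injective
  have hwf : WellFoundedLT (Fin m) := inferInstance
  exact (ht.range_inj (strictMono_id (α := Fin m))).mp
    (by rw [Set.range_eq_univ.mpr hsurj, Set.range_id])

section
variable {K G : Type*} [Field K] [AddCommGroup G] [Module K G] {r m' : ℕ}
  (b : Module.Basis (Fin r ⊕ Fin (m' + 1)) K G)

theorem aux14_wedge_apply {m : ℕ} (c : Fin m → Module.Dual K G) (x : Fin m → G) :
    wedgeDual K G c x = Matrix.det (Matrix.of fun p i => c i (x p)) := rfl

theorem aux14_g_vanish (F : Submodule K G)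
    (hF : F = Submodule.span K (Set.range (b ∘ Sum.inl))) (i : Fin (m' + 1)) {x : G}
    (hx : x ∈ F) : b.dualBasis (Sum.inr i) x = 0 := by
  have h : Submodule.span K (Set.range (b ∘ Sum.inl)) ≤
      LinearMap.ker (b.dualBasis (Sum.inr i)) := by
    rw [Submodule.span_le]
    rintro _ ⟨a, rfl⟩
    simp [LinearMap.mem_ker, Module.Basis.dualBasis_apply_self]
  exact h (hF ▸ hx)

theorem aux14_evA :
    wedgeDual K G (fun i => b.dualBasis (Sum.inr i)) (fun p => b (Sum.inr p)) = 1 := by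
  rw [aux14_wedge_apply]
  have : (Matrix.of fun p i => b.dualBasis (Sum.inr i) (b (Sum.inr p)))
      = (1 : Matrix (Fin (m'+1)) (Fin (m'+1)) K) := by
    ext p i
    simp [Module.Basis.dualBasis_apply_self, Matrix.one_apply, Finsupp.single_apply,
      Sum.inr.injEq, eq_comm]
  rw [this, Matrix.det_one]

theorem aux14_evB (j0 : Fin r) (y : Fin m' → G) :
    wedgeDual K G (fun i => b.dualBasis (Sum.inr i)) (Fin.cons (b (Sum.inl j0)) y) = 0 := by
  rw [aux14_wedge_apply]
  apply Matrix.det_eq_zero_of_row_eq_zero 0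
  intro i
  simp [Module.Basis.dualBasis_apply_self]

theorem aux14_evC (j : Fin r) (s : Fin m' → Fin (m' + 1)) :
    wedgeDual K G (Fin.cons (b.dualBasis (Sum.inl j)) (fun k => b.dualBasis (Sum.inr (s k))))
      (fun p => b (Sum.inr p)) = 0 := by
  rw [aux14_wedge_apply]
  apply Matrix.det_eq_zero_of_column_eq_zero 0
  intro p
  simp [Module.Basis.dualBasis_apply_self]

theorem aux14_evD_eq (j : Fin r) (s : Fin m' → Fin (m' + 1)) (hs : StrictMono s) :
    wedgeDual K G (Fin.cons (b.dualBasis (Sum.inl j)) (fun k => b.dualBasis (Sum.inr (s k))))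
      (Fin.cons (b (Sum.inl j)) (fun t => b (Sum.inr (s t)))) = 1 := by
  rw [aux14_wedge_apply]
  have : (Matrix.of fun p i =>
      (Fin.cons (b.dualBasis (Sum.inl j)) (fun k => b.dualBasis (Sum.inr (s k))) : Fin (m'+1) → _) i
        ((Fin.cons (b (Sum.inl j)) (fun t => b (Sum.inr (s t))) : Fin (m'+1) → G) p))
      = (1 : Matrix (Fin (m'+1)) (Fin (m'+1)) K) := by
    ext p i
    refine Fin.cases ?_ (fun t => ?_) p <;> refine Fin.cases ?_ (fun k => ?_) i <;>
      simp [Module.Basis.dualBasis_apply_self, Matrix.one_apply, Finsupp.single_apply,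
        hs.injective.eq_iff, eq_comm, Fin.succ_ne_zero]
  rw [this, Matrix.det_one]

theorem aux14_evD_ne_j (j j0 : Fin r) (hj : j ≠ j0) (s s0 : Fin m' → Fin (m' + 1)) :
    wedgeDual K G (Fin.cons (b.dualBasis (Sum.inl j)) (fun k => b.dualBasis (Sum.inr (s k))))
      (Fin.cons (b (Sum.inl j0)) (fun t => b (Sum.inr (s0 t)))) = 0 := by
  rw [aux14_wedge_apply]
  apply Matrix.det_eq_zero_of_row_eq_zero 0
  intro i
  refine Fin.cases ?_ (fun k => ?_) i <;>
    simp [Module.Basis.dualBasis_apply_self, Finsupp.single_apply, hj.symm]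

theorem aux14_evD_ne_s (j j0 : Fin r) (s s0 : Fin m' → Fin (m' + 1))
    (hs : StrictMono s) (hs0 : StrictMono s0) (hne : s ≠ s0) :
    wedgeDual K G (Fin.cons (b.dualBasis (Sum.inl j)) (fun k => b.dualBasis (Sum.inr (s k))))
      (Fin.cons (b (Sum.inl j0)) (fun t => b (Sum.inr (s0 t)))) = 0 := by
  have hA : (Finset.image s Finset.univ).card = m' := by
    rw [Finset.card_image_of_injective _ hs.injective, Finset.card_univ, Fintype.card_fin]
  have hex : ∃ t, ∀ k, s0 t ≠ s k := by
    by_contra h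
    push_neg at h
    have hmem : ∀ x, s0 x ∈ Finset.image s Finset.univ := by
      intro x
      obtain ⟨k, hk⟩ := h x
      exact Finset.mem_image.mpr ⟨k, Finset.mem_univ _, hk.symm⟩
    have h1 := Finset.orderEmbOfFin_unique hA hmem hs0
    have h2 := Finset.orderEmbOfFin_unique hA (fun x => Finset.mem_image_of_mem s
      (Finset.mem_univ x)) hs
    exact hne (h2.trans h1.symm)
  obtain ⟨t, ht⟩ := hex
  rw [aux14_wedge_apply]
  apply Matrix.det_eq_zero_of_row_eq_zero t.succ
  intro i
  refine Fin.cases ?_ (fun k => ?_) i <;>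
    simp [Module.Basis.dualBasis_apply_self, Finsupp.single_apply, ht]

theorem aux14_alt_sum_apply {ι' : Type*} {m : ℕ} (S : Finset ι')
    (f : ι' → (G [⋀^Fin m]→ₗ[K] K)) (x : Fin m → G) :
    (∑ s ∈ S, f s) x = ∑ s ∈ S, f s x := by
  induction S using Finset.cons_induction with
  | empty => simp
  | cons a S ha ih => simp [Finset.sum_cons, ih]

end

/-- If `(f₁,…,f_r)` is a basis of the subspace `F ⊆ G`, extended by
`(g₁,…,g_m)` (here `m = m'+1`) to a basis of `G`, with dual basis
`(f¹,…,fʳ,g¹,…,gᵐ)`, then `Λ₁ᵐG*` is spanned by `g¹∧…∧gᵐ` together with the forms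
`fʲ ∧ g^{i₁} ∧ … ∧ g^{i_{m−1}}` for `1 ≤ j ≤ r` and `i₁ < … < i_{m−1}`. -/
theorem stmt_14 (K G : Type*) [Field K] [AddCommGroup G] [Module K G]
    [FiniteDimensional K G] (r m' : ℕ) (b : Module.Basis (Fin r ⊕ Fin (m' + 1)) K G)
    (F : Submodule K G) (hF : F = Submodule.span K (Set.range (b ∘ Sum.inl))) :
    Lambda1 K G F (m' + 1) =
      Submodule.span K
        {x : G [⋀^Fin (m' + 1)]→ₗ[K] K |
          x = wedgeDual K G (fun i => b.dualBasis (Sum.inr i)) ∨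
          ∃ (j : Fin r) (s : Fin m' → Fin (m' + 1)), StrictMono s ∧
            x = wedgeDual K G
              (Fin.cons (b.dualBasis (Sum.inl j)) (fun k => b.dualBasis (Sum.inr (s k))))} := by
  classical
  set S : Set (G [⋀^Fin (m' + 1)]→ₗ[K] K) :=
    {x : G [⋀^Fin (m' + 1)]→ₗ[K] K |
      x = wedgeDual K G (fun i => b.dualBasis (Sum.inr i)) ∨
      ∃ (j : Fin r) (s : Fin m' → Fin (m' + 1)), StrictMono s ∧
        x = wedgeDual K G
          (Fin.cons (b.dualBasis (Sum.inl j)) (fun k => b.dualBasis (Sum.inr (s k))))} with hS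
  have hFmem : ∀ a : Fin r, b (Sum.inl a) ∈ F := by
    intro a
    rw [hF]
    exact Submodule.subset_span ⟨a, rfl⟩
  -- span S ≤ Lambda1
  have hle1 : Submodule.span K S ≤ Lambda1 K G F (m' + 1) := by
    rw [Submodule.span_le]
    rintro x (rfl | ⟨j, s, hs, rfl⟩) <;>
      rw [SetLike.mem_coe, aux14_mem_Lambda1] <;> intro y i j' hij' hi hj'
    · have hrow0 : ∀ p : Fin (m' + 1), y p ∈ F →
          (fun t => b.dualBasis (Sum.inr t) (y p)) = (0 : K) • (0 : Fin (m' + 1) → K) := by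
        intro p hp
        funext t
        rw [aux14_g_vanish b F hF t hp]
        simp
      rw [aux14_wedge_apply]
      exact aux14_det_rows_dep K _ i j' hij' 0 0 0 (hrow0 i hi) (hrow0 j' hj')
    · have hrow : ∀ p : Fin (m' + 1), y p ∈ F →
          (fun t => (Fin.cons (b.dualBasis (Sum.inl j))
              (fun k => b.dualBasis (Sum.inr (s k))) : Fin (m' + 1) → Module.Dual K G) t (y p))
            = (b.dualBasis (Sum.inl j) (y p)) • (Pi.single (0 : Fin (m' + 1)) (1 : K) : Fin (m' + 1) → K) := by
        intro p hp
        funext t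
        refine Fin.cases ?_ (fun k => ?_) t
        · rw [Fin.cons_zero]
          simp [Pi.single_eq_same]
        · rw [Fin.cons_succ, aux14_g_vanish b F hF _ hp]
          simp [Pi.single_eq_of_ne (Fin.succ_ne_zero k)]
      rw [aux14_wedge_apply]
      exact aux14_det_rows_dep K _ i j' hij' (Pi.single 0 1) _ _ (hrow i hi) (hrow j' hj')
  refine le_antisymm ?_ hle1
  -- Lambda1 ≤ span S
  intro α hα
  replace hα := aux14_mem_Lambda1.mp hα
  set SM : Finset (Fin m' → Fin (m' + 1)) :=
    Finset.univ.filter (fun s => StrictMono s) with hSM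
  set β : G [⋀^Fin (m' + 1)]→ₗ[K] K :=
    α (fun p => b (Sum.inr p)) • wedgeDual K G (fun i => b.dualBasis (Sum.inr i)) +
      ∑ j : Fin r, ∑ s ∈ SM,
        α (Fin.cons (b (Sum.inl j)) (fun t => b (Sum.inr (s t)))) •
          wedgeDual K G
            (Fin.cons (b.dualBasis (Sum.inl j)) (fun k => b.dualBasis (Sum.inr (s k)))) with hβ
  have hβmem : β ∈ Submodule.span K S := by
    refine Submodule.add_mem _ (Submodule.smul_mem _ _ (Submodule.subset_span (Or.inl rfl)))
      (Submodule.sum_mem _ fun j _ => Submodule.sum_mem _ fun s hsmem =>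
        Submodule.smul_mem _ _ (Submodule.subset_span
          (Or.inr ⟨j, s, (Finset.mem_filter.mp hsmem).2, rfl⟩)))
  have hβΛ := aux14_mem_Lambda1.mp (hle1 hβmem)
  -- evaluate β at the two canonical shapes
  have hβg : β (fun p => b (Sum.inr p)) = α (fun p => b (Sum.inr p)) := by
    rw [hβ]
    simp only [AlternatingMap.add_apply, AlternatingMap.smul_apply, aux14_alt_sum_apply]
    rw [aux14_evA b]
    rw [Finset.sum_eq_zero fun j _ => Finset.sum_eq_zero fun s _ => by
      rw [aux14_evC b j s, smul_zero]]
    simp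
  have hβc : ∀ (j0 : Fin r) (s0 : Fin m' → Fin (m' + 1)), StrictMono s0 →
      β (Fin.cons (b (Sum.inl j0)) (fun t => b (Sum.inr (s0 t)))) =
        α (Fin.cons (b (Sum.inl j0)) (fun t => b (Sum.inr (s0 t)))) := by
    intro j0 s0 hs0
    rw [hβ]
    simp only [AlternatingMap.add_apply, AlternatingMap.smul_apply, aux14_alt_sum_apply]
    rw [aux14_evB b j0, smul_zero, zero_add]
    rw [Finset.sum_eq_single j0]
    · rw [Finset.sum_eq_single s0]
      · rw [aux14_evD_eq b j0 s0 hs0, smul_eq_mul, mul_one]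
      · intro s hsmem hne
        rw [aux14_evD_ne_s b j0 j0 s s0 (Finset.mem_filter.mp hsmem).2 hs0 hne, smul_zero]
      · intro h
        exact absurd (Finset.mem_filter.mpr ⟨Finset.mem_univ _, hs0⟩) h
    · intro j _ hne
      exact Finset.sum_eq_zero fun s _ => by
        rw [aux14_evD_ne_j b j j0 hne s s0, smul_zero]
    · intro h
      exact absurd (Finset.mem_univ j0) h
  -- show α = β
  have hαβ : α = β := by
    apply Module.Basis.ext_alternating b
    intro v hv
    by_cases htwo : ∃ p q : Fin (m' + 1), p ≠ q ∧ (∃ a, v p = Sum.inl a) ∧ ∃ a, v q = Sum.inl a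
    · obtain ⟨p, q, hpq, ⟨a1, ha1⟩, ⟨a2, ha2⟩⟩ := htwo
      have hp : b (v p) ∈ F := ha1 ▸ hFmem a1
      have hq : b (v q) ∈ F := ha2 ▸ hFmem a2
      rw [hα (fun i => b (v i)) p q hpq hp hq, hβΛ (fun i => b (v i)) p q hpq hp hq]
    · push_neg at htwo
      obtain ⟨σ, hσmono⟩ : ∃ σ : Equiv.Perm (Fin (m' + 1)),
          Monotone ((fun i => finSumFinEquiv (v i)) ∘ σ) :=
        ⟨Tuple.sort _, Tuple.monotone_sort _⟩
      have hstrict : StrictMono ((fun i => finSumFinEquiv (v i)) ∘ σ) :=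
        hσmono.strictMono_of_injective
          ((finSumFinEquiv.injective.comp hv).comp σ.injective)
      set w : Fin (m' + 1) → Fin r ⊕ Fin (m' + 1) := fun i => v (σ i) with hw
      have hkey : ∀ {p q : Fin (m' + 1)}, p < q →
          finSumFinEquiv (w p) < finSumFinEquiv (w q) := fun h => hstrict h
      have hwtwo : ∀ p q : Fin (m' + 1), p ≠ q → (∃ a, w p = Sum.inl a) →
          ∀ a, w q ≠ Sum.inl a := by
        intro p q hpq h1 a h2
        exact htwo (σ p) (σ q) (fun h => hpq (σ.injective h)) h1 a h2
      have hmain : α (fun i => b (w i)) = β (fun i => b (w i)) := by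
        by_cases h0 : ∃ a, w 0 = Sum.inl a
        · obtain ⟨j0, hj0⟩ := h0
          have htail : ∀ k : Fin m', ∃ a, w k.succ = Sum.inr a := by
            intro k
            cases hwk : w k.succ with
            | inl a => exact absurd hwk (hwtwo 0 k.succ (Fin.succ_ne_zero k).symm ⟨j0, hj0⟩ a)
            | inr a => exact ⟨a, rfl⟩
          choose s0 hs0 using htail
          have hs0mono : StrictMono s0 := by
            intro p q hpq
            have h1 := hkey (Fin.succ_lt_succ_iff.mpr hpq)
            rw [hs0, hs0] at h1
            simp only [finSumFinEquiv_apply_right, Fin.lt_def, Fin.coe_natAdd] at h1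
            rw [Fin.lt_def]
            omega
          have hwc : w = Fin.cons (Sum.inl j0) (fun k => Sum.inr (s0 k)) := by
            funext p
            refine Fin.cases ?_ (fun k => ?_) p
            · rw [Fin.cons_zero]; exact hj0
            · rw [Fin.cons_succ]; exact hs0 k
          have hfun : (fun i => b (w i)) =
              Fin.cons (b (Sum.inl j0)) (fun t => b (Sum.inr (s0 t))) := by
            funext p
            refine Fin.cases ?_ (fun k => ?_) p
            · rw [Fin.cons_zero, hwc, Fin.cons_zero]
            · rw [Fin.cons_succ, hwc, Fin.cons_succ]
          rw [hfun, hβc j0 s0 hs0mono]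
        · have hall : ∀ p, ∃ a, w p = Sum.inr a := by
            intro p
            cases hwp : w p with
            | inl a =>
              exfalso
              rcases Fin.eq_zero_or_eq_succ p with rfl | ⟨k, rfl⟩
              · exact h0 ⟨a, hwp⟩
              · cases hw0 : w 0 with
                | inl a0 => exact h0 ⟨a0, hw0⟩
                | inr a0 =>
                  have h1 := hkey (Fin.succ_pos k)
                  rw [hw0, hwp] at h1
                  simp only [finSumFinEquiv_apply_left, finSumFinEquiv_apply_right,
                    Fin.lt_def, Fin.coe_castAdd, Fin.coe_natAdd] at h1
                  have := a.isLt
                  omega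
            | inr a => exact ⟨a, rfl⟩
          choose t ht using hall
          have htmono : StrictMono t := by
            intro p q hpq
            have h1 := hkey hpq
            rw [ht, ht] at h1
            simp only [finSumFinEquiv_apply_right, Fin.lt_def, Fin.coe_natAdd] at h1
            rw [Fin.lt_def]
            omega
          have htid : t = id := aux14_strictMono_fin_id htmono
          have hfun : (fun i => b (w i)) = fun p => b (Sum.inr p) := by
            funext p
            rw [ht p, htid]
            rfl
          rw [hfun, hβg]
      -- transport along σ
      have h1 := α.map_perm (fun i => b (v i)) σ
      have h2 := β.map_perm (fun i => b (v i)) σ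
      have hc : ((fun i => b (v i)) ∘ σ) = fun i => b (w i) := rfl
      rw [hc] at h1 h2
      rw [hmain, h2] at h1
      exact (smul_left_cancel_iff _).mp h1.symm
  rw [hαβ]
  exact hβmem
end

section
/- An m-form α ∈ ΛᵐG* satisfies i(u)i(v)α = 0 for all u, v ∈ F if and only if α lies in the image of the wedge map G* ⊗ Λ^{m−1}(ann F) → ΛᵐG*, where ann F ⊆ G* is the annihilator of F; i.e., Λ₁ᵐG* is canonically isomorphic to (the image of) G* ∧ Λ^{m−1}π*(H*). -/
theorem AlternatingMap.map_eq_zero_of_eq_smul_of_eq_smul {R M N ι : Type*} [CommRing R]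
    [AddCommGroup M] [Module R M] [AddCommGroup N] [Module R N] [DecidableEq ι]
    (f : M [⋀^ι]→ₗ[R] N) {v : ι → M} {i j : ι} (hij : i ≠ j) (w : M) (a b : R)
    (hi : v i = a • w) (hj : v j = b • w) : f v = 0 := by
  have hv : v = Function.update (Function.update v i (a • w)) j (b • w) := by
    ext l
    by_cases hlj : l = j
    · subst hlj; simp [hj]
    · by_cases hli : l = i
      · subst hli; simp [hlj, hi]
      · simp [hlj, hli]
  rw [hv, f.map_update_smul, Function.update_comm hij, f.map_update_smul,
    f.map_eq_zero_of_eq _ (by simp [hij.symm]) hij, smul_zero, smul_zero]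

section

variable {K G : Type*} [Field K] [AddCommGroup G] [Module K G]

theorem wedgeDual_apply {m : ℕ} (c : Fin m → Module.Dual K G) (x : Fin m → G) :
    wedgeDual K G c x = (Matrix.of fun l k => c k (x l)).det := rfl

open Module Set Set.powersetCard exteriorPower in
theorem Module.Basis.mem_span_wedgeDual_coord {I : Type*} [LinearOrder I] [Finite I]
    (b : Basis I K G) {n : ℕ} (α : G [⋀^Fin n]→ₗ[K] K) :
    α ∈ Submodule.span K
      {w | ∃ s : Fin n ↪o I, α (b ∘ s) ≠ 0 ∧ w = wedgeDual K G (b.coord ∘ s)} := by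
  have := Fintype.ofFinite I
  have hcoord (s : powersetCard I n) : alternatingMapLinearEquiv.symm
      ((b.exteriorPower n).coord s) = wedgeDual K G (b.coord ∘ ofFinEmbEquiv.symm s) := by
    ext v
    simp only [alternatingMapLinearEquiv_symm_apply, LinearMap.compAlternatingMap_apply,
      basis_coord, ιMultiDual_apply_ιMulti, wedgeDual_apply]
    rfl
  have hα : ∑ s, α (b ∘ ofFinEmbEquiv.symm s) •
      wedgeDual K G (b.coord ∘ ofFinEmbEquiv.symm s) = α := by
    conv_rhs => rw [← alternatingMapLinearEquiv.symm_apply_apply α,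
      ← (b.exteriorPower n).sum_dual_apply_smul_coord (alternatingMapLinearEquiv α)]
    simp [map_sum, hcoord, basis_apply, ιMulti_family]
  have hmem : ∑ s, α (b ∘ ofFinEmbEquiv.symm s) •
      wedgeDual K G (b.coord ∘ ofFinEmbEquiv.symm s) ∈ Submodule.span K
        {w | ∃ s : Fin n ↪o I, α (b ∘ s) ≠ 0 ∧ w = wedgeDual K G (b.coord ∘ s)} := by
    refine Submodule.sum_mem _ fun s _ => ?_
    by_cases hs : α (b ∘ ofFinEmbEquiv.symm s) = 0
    · simp [hs]
    · exact Submodule.smul_mem _ _ (Submodule.subset_span ⟨_, hs, rfl⟩)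
  rwa [hα] at hmem

def annihilatorWedges (F : Submodule K G) (m' : ℕ) : Set (G [⋀^Fin (m' + 1)]→ₗ[K] K) :=
  {x | ∃ (ξ : Module.Dual K G) (c : Fin m' → Module.Dual K G),
    (∀ k, c k ∈ F.dualAnnihilator) ∧ x = wedgeDual K G (Fin.cons ξ c)}

theorem wedgeDual_cons_mem_Lambda1 {F : Submodule K G} {m' : ℕ} (ξ : Module.Dual K G)
    {c : Fin m' → Module.Dual K G} (hc : ∀ k, c k ∈ F.dualAnnihilator) :
    wedgeDual K G (Fin.cons ξ c) ∈ Lambda1 K G F (m' + 1) := by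
  intro x i j hij hi hj
  have hrow (l : Fin (m' + 1)) (hl : x l ∈ F) :
      (fun k => (Fin.cons ξ c : Fin (m' + 1) → Module.Dual K G) k (x l)) =
        ξ (x l) • Pi.single 0 1 := by
    ext k
    cases k using Fin.cases with
    | zero => simp
    | succ k => simp [(Submodule.mem_dualAnnihilator _).mp (hc k) _ hl]
  exact Matrix.detRowAlternating.map_eq_zero_of_eq_smul_of_eq_smul
    (v := fun l k => (Fin.cons ξ c : Fin (m' + 1) → Module.Dual K G) k (x l)) hij _ _ _
    (hrow i hi) (hrow j hj)

theorem span_annihilatorWedges_le_Lambda1 (F : Submodule K G) (m' : ℕ) :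
    Submodule.span K (annihilatorWedges F m') ≤ Lambda1 K G F (m' + 1) := by
  rw [Submodule.span_le]
  rintro _ ⟨ξ, c, hc, rfl⟩
  exact wedgeDual_cons_mem_Lambda1 ξ hc

open Sum in
theorem Lambda1_le_span_annihilatorWedges {ιF ιW : Type*} [LinearOrder ιF] [LinearOrder ιW]
    [Finite ιF] [Finite ιW] {F : Submodule K G} (b : Module.Basis (ιF ⊕ₗ ιW) K G)
    (hbF : ∀ i, b (toLex (inl i)) ∈ F)
    (hann : ∀ j, b.coord (toLex (inr j)) ∈ F.dualAnnihilator) (m' : ℕ) :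
    Lambda1 K G F (m' + 1) ≤ Submodule.span K (annihilatorWedges F m') := by
  have : Finite (ιF ⊕ₗ ιW) := inferInstanceAs (Finite (ιF ⊕ ιW))
  intro α hα
  refine Submodule.span_mono ?_ (b.mem_span_wedgeDual_coord α)
  rintro _ ⟨s, hs, rfl⟩
  have htail (k : Fin m') : ∃ j, s k.succ = toLex (inr j) := by
    rcases hsk : ofLex (s k.succ) with i | j
    · exfalso
      -- in the lexicographic order, only `F`-indices lie below an `F`-index
      obtain ⟨i₀, hi₀⟩ : ∃ i₀, s 0 = toLex (inl i₀) := by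
        have hlt : s 0 < toLex (inl i) := hsk ▸ s.strictMono (Fin.succ_pos k)
        rcases hs0 : ofLex (s 0) with i₀ | j₀
        · exact ⟨i₀, hs0 ▸ rfl⟩
        · rw [← toLex_ofLex (s 0), hs0] at hlt
          exact absurd hlt.le Lex.not_inr_le_inl
      refine hs (hα _ 0 k.succ (Fin.succ_ne_zero k).symm ?_ ?_)
      · simpa [hi₀] using hbF i₀
      · simpa [← hsk] using hbF i
    · exact ⟨j, hsk ▸ rfl⟩
  choose j hj using htail
  refine ⟨b.coord (s 0), fun k => b.coord (s k.succ),
    fun k => by simpa only [hj k] using hann (j k), ?_⟩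
  exact congrArg (wedgeDual K G) (Fin.cons_self_tail (b.coord ∘ s)).symm

open Sum Module in
theorem Submodule.exists_basis_lex_inl_mem_coord_inr_mem_dualAnnihilator
    [FiniteDimensional K G] (F : Submodule K G) :
    ∃ (p q : ℕ) (b : Basis (Fin p ⊕ₗ Fin q) K G), (∀ i, b (toLex (inl i)) ∈ F) ∧
      ∀ j, b.coord (toLex (inr j)) ∈ F.dualAnnihilator := by
  obtain ⟨W, hW⟩ := F.exists_isCompl
  let b := ((finBasis K F).prod (finBasis K W)).map (F.prodEquivOfIsCompl W hW)
  refine ⟨_, _, b.reindex toLex, fun i => ?_, fun j => ?_⟩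
  · simp [b, Basis.prod_apply]
  · rw [Submodule.mem_dualAnnihilator]
    intro x hx
    simp [b, Basis.prod_repr_inr, prodEquivOfIsCompl_symm_apply_left F W hW ⟨x, hx⟩]

end

theorem stmt_15_general (K G : Type*) [Field K] [AddCommGroup G] [Module K G]
    [FiniteDimensional K G] (F : Submodule K G) (m' : ℕ) :
    Lambda1 K G F (m' + 1) =
      Submodule.span K
        {x : G [⋀^Fin (m' + 1)]→ₗ[K] K |
          ∃ (ξ : Module.Dual K G) (c : Fin m' → Module.Dual K G),
            (∀ k, c k ∈ F.dualAnnihilator) ∧ x = wedgeDual K G (Fin.cons ξ c)} := by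
  obtain ⟨p, q, b, hbF, hann⟩ := F.exists_basis_lex_inl_mem_coord_inr_mem_dualAnnihilator
  exact le_antisymm (Lambda1_le_span_annihilatorWedges b hbF hann m')
    (span_annihilatorWedges_le_Lambda1 F m')

/-- An `m`-form `α` on `G` satisfies `i(u)i(v)α = 0` for all `u, v ∈ F` iff
it lies in the image of the wedge map `G* ⊗ Λ^{m−1}(ann F) → ΛᵐG*`, i.e. `Λ₁ᵐG*` equals
the span of the wedges `ξ ∧ η₁ ∧ … ∧ η_{m-1}` with `ξ ∈ G*` and `ηᵢ` in the annihilator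
of `F` (here `m = m'+1`, and `ann F ≅ π*(H*)`). -/
theorem stmt_15 (K G H : Type*) [Field K] [AddCommGroup G] [Module K G]
    [AddCommGroup H] [Module K H] [FiniteDimensional K G] [FiniteDimensional K H]
    (F : Submodule K G) (π : G →ₗ[K] H) (hπ : Function.Surjective π)
    (hker : LinearMap.ker π = F) (m' : ℕ) (hm : Module.finrank K H = m' + 1) :
    Lambda1 K G F (m' + 1) =
      Submodule.span K
        {x : G [⋀^Fin (m' + 1)]→ₗ[K] K |
          ∃ (ξ : Module.Dual K G) (c : Fin m' → Module.Dual K G),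
            (∀ k, c k ∈ F.dualAnnihilator) ∧ x = wedgeDual K G (Fin.cons ξ c)} :=
  stmt_15_general K G F m'
end
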